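/- Let r ∈ ℂ, and let K_r(z;τ) = (2i/(z-τ)) · ((z̄-τ)/(z̄-z))^{r-1} for z, τ ∈ ℍ, z ≠ τ. Then ξ_r K_r(·;τ)(z) = (r̄ - 1) · ((z - τ̄)/(2i))^{r̄-2}; in particular K_r(·;τ) is r-harmonic on ℍ \ {τ}. -/

import Mathlib

/-!
Write `K_r(z;τ) = K(z, z̄)` with `K(u, v) = 2i/(u-τ) · ((v-τ)/(v-u))^(r-1)` holomorphic in both
variables near `(z, z̄)`. Then the Wirtinger derivatives of `K_r` are the partial derivatives of `K`:
`∂̄K_r = ∂_v K = -2i(r-1) q^(r-2) / (z̄-z)²` with `q = (z̄-τ)/(z̄-z)`. Since `q` has positive real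
part, conjugation commutes with the principal power, and `z̄ - z = -2iy` turns `2i y^r̄ · conj(∂̄K_r)`
into `(r̄-1)((z-τ̄)/(2i))^(r̄-2)`. Moreover `∂_u ∂_v K = r/(v-u) · ∂_v K`, so `∂∂̄K_r = (ir/2y) ∂̄K_r`,
which is exactly the relation making `Δ_r K_r = -4y² ∂∂̄K_r + 2iry ∂̄K_r` vanish.
-/

open Complex

/-- The kernel `K_r(z;τ) = (2i/(z-τ)) ((z̄-τ)/(z̄-z))^(r-1)` (principal branch; the
ratio never lies in `(-∞,0]` for `z, τ` in the upper half-plane, so this is the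
continuous branch). -/
noncomputable def Kker (r : ℂ) (z τ : ℂ) : ℂ :=
  2 * Complex.I / (z - τ) *
    (((starRingEnd ℂ z - τ) / (starRingEnd ℂ z - z)) ^ (r - 1))

noncomputable def wderivBar (F : ℂ → ℂ) (z : ℂ) : ℂ :=
  (fderiv ℝ F z 1 + Complex.I * fderiv ℝ F z Complex.I) / 2

noncomputable def wderiv (F : ℂ → ℂ) (z : ℂ) : ℂ :=
  (fderiv ℝ F z 1 - Complex.I * fderiv ℝ F z Complex.I) / 2

noncomputable def hlaplacian (r : ℂ) (F : ℂ → ℂ) (z : ℂ) : ℂ :=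
  -4 * (z.im : ℂ) ^ 2 * wderiv (fun w => wderivBar F w) z +
    2 * Complex.I * r * (z.im : ℂ) * wderivBar F z

noncomputable def shadowOp (r : ℂ) (F : ℂ → ℂ) (z : ℂ) : ℂ :=
  2 * Complex.I * ((z.im : ℂ) ^ (starRingEnd ℂ r)) * (starRingEnd ℂ) (wderivBar F z)

open ComplexConjugate

section Wirtinger

variable {F : ℂ → ℂ} {z A B : ℂ}

lemma wderivBar_eq_of_hasFDerivAt
    (h : HasFDerivAt F (A • ContinuousLinearMap.id ℝ ℂ + B • conjCLE.toContinuousLinearMap) z) :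
    wderivBar F z = B := by
  simp only [wderivBar, h.fderiv, add_apply, smul_apply,
    ContinuousLinearMap.id_apply, ContinuousLinearEquiv.coe_coe, conjCLE_apply, map_one, conj_I,
    smul_eq_mul]
  ring_nf
  rw [I_sq]
  ring

lemma wderiv_eq_of_hasFDerivAt
    (h : HasFDerivAt F (A • ContinuousLinearMap.id ℝ ℂ + B • conjCLE.toContinuousLinearMap) z) :
    wderiv F z = A := by
  simp only [wderiv, h.fderiv, add_apply, smul_apply,
    ContinuousLinearMap.id_apply, ContinuousLinearEquiv.coe_coe, conjCLE_apply, map_one, conj_I,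
    smul_eq_mul]
  ring_nf
  rw [I_sq]
  ring

variable {G : ℂ × ℂ → ℂ} {L : ℂ × ℂ →L[ℂ] ℂ}

lemma HasFDerivAt.comp_conj (hG : HasFDerivAt G L (z, conj z)) :
    HasFDerivAt (fun w => G (w, conj w))
      (L (1, 0) • ContinuousLinearMap.id ℝ ℂ + L (0, 1) • conjCLE.toContinuousLinearMap) z := by
  have hdiag : HasFDerivAt (fun w : ℂ => (w, conj w))
      ((ContinuousLinearMap.id ℝ ℂ).prod conjCLE.toContinuousLinearMap) z :=
    ((ContinuousLinearMap.id ℝ ℂ).prod conjCLE.toContinuousLinearMap).hasFDerivAt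
  refine ((hG.restrictScalars ℝ).comp z hdiag).congr_fderiv (ContinuousLinearMap.ext fun v => ?_)
  have hv : (v, conj v) = v • ((1 : ℂ), (0 : ℂ)) + conj v • ((0 : ℂ), (1 : ℂ)) := by
    simp
  simp only [ContinuousLinearMap.coe_comp, Function.comp_apply, ContinuousLinearMap.prod_apply,
    ContinuousLinearMap.coe_restrictScalars', ContinuousLinearMap.id_apply,
    ContinuousLinearEquiv.coe_coe, conjCLE_apply, add_apply,
    smul_apply, hv, map_add, map_smul, smul_eq_mul]
  ring

lemma wderivBar_comp_conj {Q : ℂ} (hG : DifferentiableAt ℂ G (z, conj z))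
    (hQ : HasDerivAt (fun v => G (z, v)) Q (conj z)) :
    wderivBar (fun w => G (w, conj w)) z = Q := by
  rw [wderivBar_eq_of_hasFDerivAt hG.hasFDerivAt.comp_conj]
  exact (hG.hasFDerivAt.comp_hasDerivAt _ ((hasDerivAt_const _ z).prodMk (hasDerivAt_id _))).unique hQ

lemma wderiv_comp_conj {P : ℂ} (hG : DifferentiableAt ℂ G (z, conj z))
    (hP : HasDerivAt (fun u => G (u, conj z)) P z) :
    wderiv (fun w => G (w, conj w)) z = P := by
  rw [wderiv_eq_of_hasFDerivAt hG.hasFDerivAt.comp_conj]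
  exact (hG.hasFDerivAt.comp_hasDerivAt z ((hasDerivAt_id z).prodMk (hasDerivAt_const _ _))).unique hP

end Wirtinger

section PolarizedKernel

noncomputable def polarizedKernel (r τ : ℂ) (p : ℂ × ℂ) : ℂ :=
  2 * I / (p.1 - τ) * ((p.2 - τ) / (p.2 - p.1)) ^ (r - 1)

noncomputable def polarizedKernelDerivSnd (r τ : ℂ) (p : ℂ × ℂ) : ℂ :=
  -2 * I * (r - 1) * ((p.2 - τ) / (p.2 - p.1)) ^ (r - 2) / (p.2 - p.1) ^ 2

variable {r τ u v : ℂ}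

lemma hasDerivAt_polarizedKernel_snd (hu : u ≠ τ) (huv : v ≠ u)
    (hq : (v - τ) / (v - u) ∈ slitPlane) :
    HasDerivAt (fun v => polarizedKernel r τ (u, v)) (polarizedKernelDerivSnd r τ (u, v)) v := by
  have hquot : HasDerivAt (fun v => (v - τ) / (v - u)) ((τ - u) / (v - u) ^ 2) v :=
    (((hasDerivAt_id v).sub_const τ).div ((hasDerivAt_id v).sub_const u)
      (sub_ne_zero.2 huv)).congr_deriv (by simp only [id]; ring)
  refine ((hquot.cpow_const hq).const_mul (2 * I / (u - τ))).congr_deriv ?_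
  simp only [polarizedKernelDerivSnd]
  rw [show r - 1 - 1 = r - 2 by ring]
  field_simp [sub_ne_zero.2 hu, sub_ne_zero.2 huv]
  ring

lemma hasDerivAt_polarizedKernelDerivSnd_fst (huv : v ≠ u)
    (hq : (v - τ) / (v - u) ∈ slitPlane) :
    HasDerivAt (fun u => polarizedKernelDerivSnd r τ (u, v))
      (r / (v - u) * polarizedKernelDerivSnd r τ (u, v)) u := by
  have hvu : v - u ≠ 0 := sub_ne_zero.2 huv
  have hdiff : HasDerivAt (fun u => v - u) (-1) u := by
    simpa using (hasDerivAt_id u).const_sub v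
  have hquot : HasDerivAt (fun u => (v - τ) / (v - u)) ((v - τ) / (v - u) / (v - u)) u :=
    ((hasDerivAt_const u (v - τ)).div hdiff hvu).congr_deriv (by field_simp; ring)
  refine (((hquot.cpow_const hq).const_mul (-2 * I * (r - 1))).div (hdiff.pow 2)
    (pow_ne_zero 2 hvu)).congr_deriv ?_
  have hvτ : v - τ ≠ 0 := (div_ne_zero_iff.1 (slitPlane_ne_zero hq)).1
  simp only [polarizedKernelDerivSnd, Pi.pow_apply]
  rw [cpow_sub _ _ (slitPlane_ne_zero hq), cpow_one]
  field_simp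
  ring

end PolarizedKernel

section UpperHalfPlane

variable {r τ z : ℂ}

lemma conj_sub_self_ne_zero (hz : z.im ≠ 0) : conj z - z ≠ 0 :=
  sub_ne_zero.2 (mt conj_eq_iff_im.1 hz)

/-- For `z, τ ∈ ℍ` the ratio has real part `(z.im + τ.im) / (2 z.im) > 0`. -/
lemma conj_sub_div_conj_sub_self_mem_slitPlane (hτ : 0 < τ.im) (hz : 0 < z.im) :
    (conj z - τ) / (conj z - z) ∈ slitPlane := by
  refine Or.inl ?_
  have hnorm : normSq (conj z - z) = 4 * z.im ^ 2 := by
    simp only [normSq_apply, sub_re, sub_im, conj_re, conj_im]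
    ring
  rw [div_re, hnorm]
  simp only [sub_re, sub_im, conj_re, conj_im, sub_self, mul_zero, zero_div, zero_add]
  apply div_pos <;> nlinarith

lemma wderivBar_Kker (hτ : 0 < τ.im) (hz : 0 < z.im) (hne : z ≠ τ) :
    wderivBar (fun w => Kker r w τ) z = polarizedKernelDerivSnd r τ (z, conj z) := by
  have hq := conj_sub_div_conj_sub_self_mem_slitPlane hτ hz
  have hzz := conj_sub_self_ne_zero hz.ne'
  have hzτ := sub_ne_zero.2 hne
  exact wderivBar_comp_conj (G := polarizedKernel r τ)
    (by unfold polarizedKernel; fun_prop (disch := assumption))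
    (hasDerivAt_polarizedKernel_snd hne (sub_ne_zero.1 hzz) hq)

lemma wderiv_wderivBar_Kker (hτ : 0 < τ.im) (hz : 0 < z.im) (hne : z ≠ τ) :
    wderiv (fun w => wderivBar (fun w' => Kker r w' τ) w) z =
      r / (conj z - z) * wderivBar (fun w => Kker r w τ) z := by
  have hq := conj_sub_div_conj_sub_self_mem_slitPlane hτ hz
  have hzz := conj_sub_self_ne_zero hz.ne'
  have hnear : (fun w => wderivBar (fun w' => Kker r w' τ) w) =ᶠ[nhds z]
      fun w => polarizedKernelDerivSnd r τ (w, conj w) := by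
    filter_upwards [(isOpen_lt continuous_const continuous_im).mem_nhds hz,
      isOpen_ne.mem_nhds hne] with w hw hwτ
    exact wderivBar_Kker hτ hw hwτ
  rw [wderivBar_Kker hτ hz hne, wderiv, hnear.fderiv_eq, ← wderiv]
  exact wderiv_comp_conj (G := polarizedKernelDerivSnd r τ)
    (by unfold polarizedKernelDerivSnd; fun_prop (disch := simp_all))
    (hasDerivAt_polarizedKernelDerivSnd_fst (sub_ne_zero.1 hzz) hq)

end UpperHalfPlane

lemma ofReal_mul_cpow {y : ℝ} (hy : 0 < y) {x : ℂ} (hx : x ≠ 0) (s : ℂ) :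
    ((y : ℂ) * x) ^ s = (y : ℂ) ^ s * x ^ s := by
  have hy0 : (y : ℂ) ≠ 0 := ofReal_ne_zero.2 hy.ne'
  rw [cpow_def_of_ne_zero (mul_ne_zero hy0 hx), cpow_def_of_ne_zero hx, cpow_def_of_ne_zero hy0,
    log_ofReal_mul hy hx, add_mul, exp_add, ← ofReal_log hy.le]

lemma hlaplacian_eq_zero_of_wderiv_wderivBar {r z : ℂ} {F : ℂ → ℂ}
    (h : wderiv (fun w => wderivBar F w) z = r / (conj z - z) * wderivBar F z) :
    hlaplacian r F z = 0 := by
  rcases eq_or_ne z.im 0 with hy | hy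
  · simp [hlaplacian, hy]
  · rw [hlaplacian, h, ← neg_sub, sub_conj]
    push_cast
    field_simp
    ring_nf
    rw [I_sq]
    ring

lemma shadowOp_Kker {r τ z : ℂ} (hτ : 0 < τ.im) (hz : 0 < z.im) (hne : z ≠ τ) :
    shadowOp r (fun w => Kker r w τ) z =
      (conj r - 1) * ((z - conj τ) / (2 * I)) ^ (conj r - 2) := by
  set q := (conj z - τ) / (conj z - z) with hq_def
  have hq : q ∈ slitPlane := conj_sub_div_conj_sub_self_mem_slitPlane hτ hz
  have hy : (z.im : ℂ) ≠ 0 := ofReal_ne_zero.2 hz.ne'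
  have hconj_q : conj q = (z - conj τ) / (2 * I * z.im) := by
    rw [hq_def, map_div₀, map_sub, map_sub, conj_conj, sub_conj]
    push_cast
    ring
  have hconj_pow : conj (q ^ (r - 2)) = conj q ^ (conj r - 2) := by
    rw [conj_cpow q _ (slitPlane_arg_ne_pi hq), map_sub, conj_conj, map_ofNat]
  have hsplit : ((z - conj τ) / (2 * I)) ^ (conj r - 2) =
      (z.im : ℂ) ^ (conj r - 2) * conj q ^ (conj r - 2) := by
    rw [← ofReal_mul_cpow hz ((map_ne_zero _).2 (slitPlane_ne_zero hq)), hconj_q]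
    congr 1
    field_simp
  have hy_pow : (z.im : ℂ) ^ conj r = (z.im : ℂ) ^ (conj r - 2) * (z.im : ℂ) ^ 2 := by
    rw [← cpow_two, ← cpow_add _ _ hy, sub_add_cancel]
  rw [shadowOp, wderivBar_Kker hτ hz hne, polarizedKernelDerivSnd, ← hq_def,
    ← neg_sub z (conj z), sub_conj]
  simp only [map_div₀, map_mul, map_pow, map_sub, map_neg, map_ofNat, map_one, conj_I, conj_ofReal,
    hconj_pow, hsplit, hy_pow]
  push_cast
  field_simp

/-- `ξ_r K_r(·;τ) (z) = (r̄-1) ((z-τ̄)/(2i))^(r̄-2)`; in particular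
`K_r(·;τ)` is `r`-harmonic on `ℍ \ {τ}`. -/
theorem shadow_of_kernel (r τ : ℂ) (hτ : 0 < τ.im) :
    (∀ z : ℂ, 0 < z.im → z ≠ τ →
        shadowOp r (fun w => Kker r w τ) z =
          (starRingEnd ℂ r - 1) *
            (((z - starRingEnd ℂ τ) / (2 * Complex.I)) ^ (starRingEnd ℂ r - 2))) ∧
    (∀ z : ℂ, 0 < z.im → z ≠ τ → hlaplacian r (fun w => Kker r w τ) z = 0) :=
  ⟨fun _ hz hne => shadowOp_Kker hτ hz hne,
    fun _ hz hne => hlaplacian_eq_zero_of_wderiv_wderivBar (wderiv_wderivBar_Kker hτ hz hne)⟩
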